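/- For every θ ∈ ℝ^d, the gradient of J admits the alternative expression ∇J(θ) = −ΦᵀΞ(T^{(λ)}v_θ − v_θ) + (ΦᵀΞP^{(λ)}Φ)ᵀ x_θ, where x_θ is the unique solution in span{φ(S)} of the linear system ΦᵀΞΦx = ΦᵀΞ(T^{(λ)}v_θ − v_θ). -/

import Mathlib

open Matrix

/-! Since `Ξ` is positive definite, `proj v = Φ x` holds exactly when `x` solves the normal
equations `ΦᵀΞΦ x = ΦᵀΞ v`. Hence `proj` is linear and `ξ`-self-adjoint, and the normal
equations have exactly one solution in the row space of `Φ`, the orthogonal complement of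
`ker Φ = ker ΦᵀΞΦ`. The residual `T v_θ - v_θ = r + (P - 1)Φθ` is affine in `θ`, so `J` is a
quadratic function whose gradient `((P - 1)Φ)ᵀ Ξ Π_ξ(T v_θ - v_θ) = ((P - 1)Φ)ᵀ Ξ Φ x_θ`
expands to the claimed expression. -/

namespace Matrix

variable {ι κ : Type*} [Fintype ι] [Fintype κ]

theorem IsSymm.dotProduct_mulVec_comm {W : Matrix ι ι ℝ} (hW : W.IsSymm) (u v : ι → ℝ) :
    u ⬝ᵥ W *ᵥ v = v ⬝ᵥ W *ᵥ u := by
  rw [← dotProduct_transpose_mulVec, hW.eq]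

omit [Fintype κ] in
theorem span_rows_eq_range_mulVecLin_transpose (Φ : Matrix ι κ ℝ) :
    Submodule.span ℝ (Set.range fun i => Φ i) = LinearMap.range Φᵀ.mulVecLin := by
  rw [range_mulVecLin, col_transpose]
  rfl

theorem eq_zero_of_mem_span_rows_of_mulVec_eq_zero {Φ : Matrix ι κ ℝ} {x : κ → ℝ}
    (hx : x ∈ Submodule.span ℝ (Set.range fun i => Φ i)) (hΦx : Φ *ᵥ x = 0) : x = 0 := by
  rw [span_rows_eq_range_mulVecLin_transpose] at hx
  obtain ⟨y, rfl⟩ := hx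
  have hy : y ∈ LinearMap.ker (Φᵀᵀ * Φᵀ).mulVecLin := by
    simpa [← mulVec_mulVec] using hΦx
  rwa [ker_mulVecLin_transpose_mul_self] at hy

theorem exists_mem_span_rows_mulVec_eq (Φ : Matrix ι κ ℝ) (t : κ → ℝ) :
    ∃ x ∈ Submodule.span ℝ (Set.range fun i => Φ i), Φ *ᵥ x = Φ *ᵥ t := by
  have hrange : LinearMap.range (Φ * Φᵀ).mulVecLin = LinearMap.range Φ.mulVecLin := by
    refine Submodule.eq_of_le_of_finrank_eq ?_ (rank_self_mul_transpose Φ)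
    rw [mulVecLin_mul]
    exact LinearMap.range_comp_le_range _ _
  obtain ⟨y, hy⟩ : Φ *ᵥ t ∈ LinearMap.range (Φ * Φᵀ).mulVecLin :=
    hrange ▸ LinearMap.mem_range_self _ t
  refine ⟨Φᵀ *ᵥ y, ?_, by rwa [mulVec_mulVec]⟩
  rw [span_rows_eq_range_mulVecLin_transpose]
  exact LinearMap.mem_range_self _ y

theorem transpose_mulVec_eq_zero_of_forall_mulVec_dotProduct_eq_zero {Φ : Matrix ι κ ℝ}
    {z : ι → ℝ} (h : ∀ t, Φ *ᵥ t ⬝ᵥ z = 0) : Φᵀ *ᵥ z = 0 := by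
  have hz := h (Φᵀ *ᵥ z)
  rwa [dotProduct_comm, dotProduct_mulVec, ← mulVec_transpose, dotProduct_self_eq_zero] at hz

theorem PosDef.mulVec_eq_zero_of_transpose_mul_mul_mulVec_eq_zero {W : Matrix ι ι ℝ}
    (hW : W.PosDef) {Φ : Matrix ι κ ℝ} {x : κ → ℝ} (h : (Φᵀ * W * Φ) *ᵥ x = 0) :
    Φ *ᵥ x = 0 := by
  by_contra hne
  have hpos := hW.dotProduct_mulVec_pos hne
  rw [← mulVec_mulVec, ← mulVec_mulVec] at h
  rw [star_trivial, dotProduct_comm, ← dotProduct_transpose_mulVec, h, dotProduct_zero] at hpos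
  exact hpos.false

theorem existsUnique_mem_span_rows_transpose_mul_mul_mulVec_eq {W : Matrix ι ι ℝ}
    (hW : W.PosDef) {Φ : Matrix ι κ ℝ} {b : κ → ℝ} (hb : ∃ t, (Φᵀ * W * Φ) *ᵥ t = b) :
    ∃! x, x ∈ Submodule.span ℝ (Set.range fun i => Φ i) ∧ (Φᵀ * W * Φ) *ᵥ x = b := by
  obtain ⟨t, rfl⟩ := hb
  obtain ⟨x, hx, hΦx⟩ := exists_mem_span_rows_mulVec_eq Φ t
  have hxt : (Φᵀ * W * Φ) *ᵥ x = (Φᵀ * W * Φ) *ᵥ t := by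
    rw [← mulVec_mulVec, hΦx, mulVec_mulVec]
  refine ⟨x, ⟨hx, hxt⟩, fun y ⟨hy, hyt⟩ => ?_⟩
  rw [← sub_eq_zero]
  refine eq_zero_of_mem_span_rows_of_mulVec_eq_zero (Submodule.sub_mem _ hy hx) ?_
  exact hW.mulVec_eq_zero_of_transpose_mul_mul_mulVec_eq_zero
    (by rw [mulVec_sub, hyt, hxt, sub_self])

end Matrix

section WeightedProjection

variable {ι κ : Type*} [Fintype ι] [Fintype κ] {W : Matrix ι ι ℝ} {Φ : Matrix ι κ ℝ}
  {proj : (ι → ℝ) → ι → ℝ}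

theorem transpose_mul_mul_mulVec_eq_of_proj_eq
    (horth : ∀ v t, Φ *ᵥ t ⬝ᵥ W *ᵥ (v - proj v) = 0) {v : ι → ℝ} {t : κ → ℝ}
    (ht : proj v = Φ *ᵥ t) : (Φᵀ * W * Φ) *ᵥ t = (Φᵀ * W) *ᵥ v := by
  have h := transpose_mulVec_eq_zero_of_forall_mulVec_dotProduct_eq_zero (horth v)
  rw [mulVec_sub, mulVec_sub, sub_eq_zero, ht] at h
  simp only [← mulVec_mulVec]
  exact h.symm

theorem proj_eq_of_transpose_mul_mul_mulVec_eq (hW : W.PosDef)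
    (hmem : ∀ v, ∃ t, proj v = Φ *ᵥ t) (horth : ∀ v t, Φ *ᵥ t ⬝ᵥ W *ᵥ (v - proj v) = 0)
    {v : ι → ℝ} {x : κ → ℝ} (hx : (Φᵀ * W * Φ) *ᵥ x = (Φᵀ * W) *ᵥ v) :
    proj v = Φ *ᵥ x := by
  obtain ⟨t, ht⟩ := hmem v
  have hG : (Φᵀ * W * Φ) *ᵥ (t - x) = 0 := by
    rw [mulVec_sub, transpose_mul_mul_mulVec_eq_of_proj_eq horth ht, hx, sub_self]
  rw [ht, ← sub_eq_zero, ← mulVec_sub]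
  exact hW.mulVec_eq_zero_of_transpose_mul_mul_mulVec_eq_zero hG

theorem isLinearMap_proj (hW : W.PosDef)
    (hmem : ∀ v, ∃ t, proj v = Φ *ᵥ t) (horth : ∀ v t, Φ *ᵥ t ⬝ᵥ W *ᵥ (v - proj v) = 0) :
    IsLinearMap ℝ proj := by
  constructor
  · intro u v
    obtain ⟨s, hs⟩ := hmem u
    obtain ⟨t, ht⟩ := hmem v
    rw [hs, ht, ← mulVec_add]
    refine proj_eq_of_transpose_mul_mul_mulVec_eq hW hmem horth ?_
    rw [mulVec_add, mulVec_add, transpose_mul_mul_mulVec_eq_of_proj_eq horth hs,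
      transpose_mul_mul_mulVec_eq_of_proj_eq horth ht]
  · intro c v
    obtain ⟨t, ht⟩ := hmem v
    rw [ht, ← mulVec_smul]
    refine proj_eq_of_transpose_mul_mul_mulVec_eq hW hmem horth ?_
    rw [mulVec_smul, mulVec_smul, transpose_mul_mul_mulVec_eq_of_proj_eq horth ht]

theorem proj_dotProduct_mulVec_proj (hmem : ∀ v, ∃ t, proj v = Φ *ᵥ t)
    (horth : ∀ v t, Φ *ᵥ t ⬝ᵥ W *ᵥ (v - proj v) = 0) (u v : ι → ℝ) :
    proj u ⬝ᵥ W *ᵥ proj v = proj u ⬝ᵥ W *ᵥ v := by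
  obtain ⟨t, ht⟩ := hmem u
  have h := horth v t
  rw [mulVec_sub, dotProduct_sub, sub_eq_zero] at h
  rw [ht, h]

end WeightedProjection

theorem HasFDerivAt.half_dotProduct_mulVec_self {ι E : Type*} [Fintype ι]
    [NormedAddCommGroup E] [NormedSpace ℝ E] {W : Matrix ι ι ℝ} (hW : W.IsSymm)
    {u : E → ι → ℝ} {u' : E →L[ℝ] ι → ℝ} {x : E} (hu : HasFDerivAt u u' x) {D : E →L[ℝ] ℝ}
    (hD : ∀ h, D h = u x ⬝ᵥ W *ᵥ u' h) :
    HasFDerivAt (fun y => 1 / 2 * (u y ⬝ᵥ W *ᵥ u y)) D x := by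
  let B : (ι → ℝ) →L[ℝ] (ι → ℝ) →L[ℝ] ℝ := (dotProductBilin ℝ ℝ).toContinuousBilinearMap
  have hWu : HasFDerivAt (fun y => W *ᵥ u y) (W.mulVecLin.toContinuousLinearMap ∘L u') x :=
    W.mulVecLin.toContinuousLinearMap.hasFDerivAt.comp x hu
  refine ((B.hasFDerivAt_of_bilinear hu hWu).const_mul (1 / 2)).congr_fderiv ?_
  ext h
  simp only [one_div, ContinuousLinearMap.precompR_apply, ContinuousLinearMap.compL_apply,
    smul_add, _root_.add_apply, _root_.smul_apply, ContinuousLinearMap.comp_apply,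
    LinearMap.coe_toContinuousLinearMap', mulVecBilin_apply,
    LinearMap.toContinuousBilinearMap_apply, dotProductBilin_apply_apply, smul_eq_mul,
    ContinuousLinearMap.precompL_apply, hW.dotProduct_mulVec_comm (u' h), hD, B]
  ring

theorem hasGradientAt_half_dotProduct_mulVec_proj {ι κ : Type*} [Fintype ι] [Fintype κ]
    {W : Matrix ι ι ℝ} {Φ : Matrix ι κ ℝ} {proj : (ι → ℝ) → ι → ℝ} (hW : W.PosDef)
    (hmem : ∀ v, ∃ t, proj v = Φ *ᵥ t) (horth : ∀ v t, Φ *ᵥ t ⬝ᵥ W *ᵥ (v - proj v) = 0)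
    (r : ι → ℝ) (M : Matrix ι κ ℝ) (θ : EuclideanSpace ℝ κ) :
    HasGradientAt
      (fun ϑ : EuclideanSpace ℝ κ => 1 / 2 * (proj (r + M *ᵥ ϑ) ⬝ᵥ W *ᵥ proj (r + M *ᵥ ϑ)))
      (WithLp.toLp 2 (Mᵀ *ᵥ W *ᵥ proj (r + M *ᵥ θ))) θ := by
  let projₗ := IsLinearMap.mk' proj (isLinearMap_proj hW hmem horth)
  let u' : EuclideanSpace ℝ κ →L[ℝ] ι → ℝ :=
    (projₗ ∘ₗ M.mulVecLin ∘ₗ (WithLp.linearEquiv 2 ℝ (κ → ℝ)).toLinearMap).toContinuousLinearMap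
  have hu : HasFDerivAt (fun ϑ : EuclideanSpace ℝ κ => proj (r + M *ᵥ ϑ)) u' θ := by
    have h_affine : (fun ϑ : EuclideanSpace ℝ κ => proj (r + M *ᵥ ϑ)) = fun ϑ => proj r + u' ϑ :=
      funext fun ϑ => projₗ.map_add r (M *ᵥ ϑ)
    rw [h_affine]
    exact u'.hasFDerivAt.const_add _
  rw [hasGradientAt_iff_hasFDerivAt]
  refine hu.half_dotProduct_mulVec_self (isHermitian_iff_isSymm.mp hW.isHermitian) fun h => ?_
  rw [InnerProductSpace.toDual_apply_apply, EuclideanSpace.inner_eq_star_dotProduct, star_trivial]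
  change h.ofLp ⬝ᵥ Mᵀ *ᵥ W *ᵥ proj (r + M *ᵥ θ) = proj (r + M *ᵥ θ) ⬝ᵥ W *ᵥ proj (M *ᵥ h.ofLp)
  rw [proj_dotProduct_mulVec_proj hmem horth, dotProduct_transpose_mulVec,
    (isHermitian_iff_isSymm.mp hW.isHermitian).dotProduct_mulVec_comm, dotProduct_comm]

theorem stmt_2_general
    (n d : ℕ)
    (Φ : Matrix (Fin n) (Fin d) ℝ)
    (ξ : Fin n → ℝ) (hξ : ∀ i, 0 < ξ i)
    (Ξ : Matrix (Fin n) (Fin n) ℝ) (hΞ : Ξ = Matrix.diagonal ξ)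
    (proj : (Fin n → ℝ) → (Fin n → ℝ))
    (hproj_mem : ∀ v : Fin n → ℝ, ∃ θ : Fin d → ℝ, proj v = Φ.mulVec θ)
    (hproj_orth : ∀ (v : Fin n → ℝ) (θ : Fin d → ℝ),
      Φ.mulVec θ ⬝ᵥ Ξ.mulVec (v - proj v) = 0)
    (P : Matrix (Fin n) (Fin n) ℝ) (r : Fin n → ℝ)
    (T : (Fin n → ℝ) → (Fin n → ℝ)) (hT : ∀ v, T v = r + P.mulVec v)
    (J : EuclideanSpace ℝ (Fin d) → ℝ)
    (hJ : ∀ θ : EuclideanSpace ℝ (Fin d),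
      J θ = (1 / 2) * (proj (T (Φ.mulVec θ) - Φ.mulVec θ) ⬝ᵥ
          Ξ.mulVec (proj (T (Φ.mulVec θ) - Φ.mulVec θ)))) :
    ∀ θ : EuclideanSpace ℝ (Fin d),
      (∃! x : Fin d → ℝ,
        x ∈ Submodule.span ℝ (Set.range (fun i : Fin n => Φ i)) ∧
        (Φᵀ * Ξ * Φ).mulVec x = (Φᵀ * Ξ).mulVec (T (Φ.mulVec θ) - Φ.mulVec θ)) ∧
      (∀ x : Fin d → ℝ,
        x ∈ Submodule.span ℝ (Set.range (fun i : Fin n => Φ i)) →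
        (Φᵀ * Ξ * Φ).mulVec x = (Φᵀ * Ξ).mulVec (T (Φ.mulVec θ) - Φ.mulVec θ) →
        HasGradientAt J
          (WithLp.toLp 2 (-((Φᵀ * Ξ).mulVec (T (Φ.mulVec θ) - Φ.mulVec θ)) + (Φᵀ * Ξ * P * Φ)ᵀ.mulVec x))
          θ) := by
  intro θ
  have hΞpos : Ξ.PosDef := hΞ ▸ posDef_diagonal_iff.mpr hξ
  have hresidual (ϑ : EuclideanSpace ℝ (Fin d)) :
      T (Φ *ᵥ ϑ) - Φ *ᵥ ϑ = r + ((P - 1) * Φ) *ᵥ ϑ := by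
    rw [hT, Matrix.sub_mul, Matrix.one_mul, sub_mulVec, ← mulVec_mulVec, add_sub_assoc]
  obtain ⟨t, ht⟩ := hproj_mem (T (Φ *ᵥ θ) - Φ *ᵥ θ)
  refine ⟨existsUnique_mem_span_rows_transpose_mul_mul_mulVec_eq hΞpos
    ⟨t, transpose_mul_mul_mulVec_eq_of_proj_eq hproj_orth ht⟩, fun x _ hx => ?_⟩
  have hJ_eq : J = fun ϑ : EuclideanSpace ℝ (Fin d) =>
      1 / 2 * (proj (r + ((P - 1) * Φ) *ᵥ ϑ) ⬝ᵥ Ξ *ᵥ proj (r + ((P - 1) * Φ) *ᵥ ϑ)) :=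
    funext fun ϑ => by rw [hJ, hresidual]
  rw [hJ_eq]
  convert hasGradientAt_half_dotProduct_mulVec_proj hΞpos hproj_mem hproj_orth r
    ((P - 1) * Φ) θ using 2
  rw [← hresidual, proj_eq_of_transpose_mul_mul_mulVec_eq hΞpos hproj_mem hproj_orth hx, ← hx]
  have hΞsymm : Ξᵀ = Ξ := (isHermitian_iff_isSymm.mp hΞpos.isHermitian).eq
  simp only [mulVec_mulVec, ← neg_mulVec, ← add_mulVec, transpose_mul, transpose_sub,
    hΞsymm, Matrix.mul_assoc, Matrix.sub_mul, Matrix.one_mul]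
  congr 1
  abel

/-- For every `θ`, the gradient of the projected-Bellman-error objective `J`
admits the alternative expression `∇J(θ) = −ΦᵀΞ(T^{(λ)}v_θ − v_θ) + (ΦᵀΞP^{(λ)}Φ)ᵀ x_θ`,
where `x_θ` is the unique solution in `span{φ(S)}` of `ΦᵀΞΦx = ΦᵀΞ(T^{(λ)}v_θ − v_θ)`. -/
theorem stmt_2
    (n d : ℕ) (hn : 0 < n) (hd : 0 < d)
    (Φ : Matrix (Fin n) (Fin d) ℝ) (hΦ : Φ ≠ 0)
    (ξ : Fin n → ℝ) (hξ : ∀ i, 0 < ξ i)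
    (Ξ : Matrix (Fin n) (Fin n) ℝ) (hΞ : Ξ = Matrix.diagonal ξ)
    (proj : (Fin n → ℝ) → (Fin n → ℝ))
    (hproj_mem : ∀ v : Fin n → ℝ, ∃ θ : Fin d → ℝ, proj v = Φ.mulVec θ)
    (hproj_orth : ∀ (v : Fin n → ℝ) (θ : Fin d → ℝ),
      Φ.mulVec θ ⬝ᵥ Ξ.mulVec (v - proj v) = 0)
    (P : Matrix (Fin n) (Fin n) ℝ) (r : Fin n → ℝ)
    (T : (Fin n → ℝ) → (Fin n → ℝ)) (hT : ∀ v, T v = r + P.mulVec v)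
    (J : EuclideanSpace ℝ (Fin d) → ℝ)
    (hJ : ∀ θ : EuclideanSpace ℝ (Fin d),
      J θ = (1 / 2) * (proj (T (Φ.mulVec θ) - Φ.mulVec θ) ⬝ᵥ
          Ξ.mulVec (proj (T (Φ.mulVec θ) - Φ.mulVec θ)))) :
    ∀ θ : EuclideanSpace ℝ (Fin d),
      (∃! x : Fin d → ℝ,
        x ∈ Submodule.span ℝ (Set.range (fun i : Fin n => Φ i)) ∧
        (Φᵀ * Ξ * Φ).mulVec x = (Φᵀ * Ξ).mulVec (T (Φ.mulVec θ) - Φ.mulVec θ)) ∧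
      (∀ x : Fin d → ℝ,
        x ∈ Submodule.span ℝ (Set.range (fun i : Fin n => Φ i)) →
        (Φᵀ * Ξ * Φ).mulVec x = (Φᵀ * Ξ).mulVec (T (Φ.mulVec θ) - Φ.mulVec θ) →
        HasGradientAt J
          (WithLp.toLp 2 (-((Φᵀ * Ξ).mulVec (T (Φ.mulVec θ) - Φ.mulVec θ)) + (Φᵀ * Ξ * P * Φ)ᵀ.mulVec x))
          θ) :=
  stmt_2_general n d Φ ξ hξ Ξ hΞ proj hproj_mem hproj_orth P r T hT J hJ
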